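/- arXiv:2508.19426 — 2 statements merged into one kernel-verified Lean document; each statement's English description precedes it below -/
import Mathlib

section
/- Let Σ be a monoid acting on a set D, and regard ℘(D) as a module over the quantale ℘(Σ). Given a consequence relation ⊢ ⊆ ℘(D) × ℘(D) (a relation satisfying: Φ ⊢ Ψ whenever Ψ ⊆ Φ; if Φ ⊢ Ψ and Ψ ⊢ X then Φ ⊢ X; if Φ ⊢ Ψ_i for all i then Φ ⊢ ⋃Ψ_i; and structurality: Φ ⊢ Ψ implies σ[Φ] ⊢ σ[Ψ] for every σ ∈ Σ), the map γ_⊢(Φ) := ⋃{Ψ : Φ ⊢ Ψ} is a ℘(Σ)-module nucleus on ℘(D). Conversely, every ℘(Σ)-module nucleus γ gives rise to a consequence relation via Φ ⊢_γ Ψ iff Ψ ⊆ γ(Φ), and these two constructions are mutually inverse: ⊢_{γ_⊢} = ⊢ and γ_{⊢_γ} = γ. -/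
open Set

namespace PDS

def IsQuantale {Q : Type*} [CompleteLattice Q] (m : Q → Q → Q) (e : Q) : Prop :=
  (∀ a b c, m (m a b) c = m a (m b c)) ∧
  (∀ a, m e a = a) ∧ (∀ a, m a e = a) ∧
  (∀ a (s : Set Q), m a (sSup s) = ⨆ b ∈ s, m a b) ∧
  (∀ (s : Set Q) b, m (sSup s) b = ⨆ a ∈ s, m a b)

def IsQMod {Q M : Type*} [CompleteLattice Q] [CompleteLattice M]
    (m : Q → Q → Q) (e : Q) (sm : Q → M → M) : Prop :=
  (∀ a (X : Set M), sm a (sSup X) = ⨆ x ∈ X, sm a x) ∧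
  (∀ (A : Set Q) (x : M), sm (sSup A) x = ⨆ a ∈ A, sm a x) ∧
  (∀ a b x, sm (m a b) x = sm a (sm b x)) ∧
  (∀ x, sm e x = x)

def IsSupHom {M N : Type*} [CompleteLattice M] [CompleteLattice N] (f : M → N) : Prop :=
  ∀ X : Set M, f (sSup X) = ⨆ x ∈ X, f x

def IsQModHom {Q M N : Type*} [CompleteLattice Q] [CompleteLattice M] [CompleteLattice N]
    (sm : Q → M → M) (sn : Q → N → N) (f : M → N) : Prop :=
  IsSupHom f ∧ ∀ a x, f (sm a x) = sn a (f x)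

def IsQuantaleHom {Q R : Type*} [CompleteLattice Q] [CompleteLattice R]
    (mq : Q → Q → Q) (eQ : Q) (mr : R → R → R) (eR : R) (h : Q → R) : Prop :=
  IsSupHom h ∧ (∀ a b, h (mq a b) = mr (h a) (h b)) ∧ h eQ = eR

def IsQModNucleus {Q M : Type*} [CompleteLattice Q] [CompleteLattice M]
    (sm : Q → M → M) (γ : M → M) : Prop :=
  (∀ x, x ≤ γ x) ∧ Monotone γ ∧ (∀ x, γ (γ x) = γ x) ∧
  (∀ a x, sm a (γ x) ≤ γ (sm a x))

def actOn {S D : Type*} [SMul S D] (A : Set S) (Φ : Set D) : Set D :=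
  Set.image2 (· • ·) A Φ

def IsConsRel {S D : Type*} [Monoid S] [MulAction S D] (r : Set D → Set D → Prop) : Prop :=
  (∀ Φ Ψ : Set D, Ψ ⊆ Φ → r Φ Ψ) ∧
  (∀ Φ Ψ X : Set D, r Φ Ψ → r Ψ X → r Φ X) ∧
  (∀ (Φ : Set D) (F : Set (Set D)), (∀ Ψ ∈ F, r Φ Ψ) → r Φ (⋃₀ F)) ∧
  (∀ (σ : S) (Φ Ψ : Set D), r Φ Ψ → r ((fun φ => σ • φ) '' Φ) ((fun φ => σ • φ) '' Ψ))

def IsPNucleus {S D : Type*} [Monoid S] [MulAction S D] (γ : Set D → Set D) : Prop :=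
  (∀ Φ : Set D, Φ ⊆ γ Φ) ∧ (∀ Φ Ψ : Set D, Φ ⊆ Ψ → γ Φ ⊆ γ Ψ) ∧
  (∀ Φ : Set D, γ (γ Φ) = γ Φ) ∧
  (∀ (A : Set S) (Φ : Set D), actOn A (γ Φ) ⊆ γ (actOn A Φ))

def gammaOf {D : Type*} (r : Set D → Set D → Prop) (Φ : Set D) : Set D :=
  ⋃₀ {Ψ | r Φ Ψ}

theorem stmt4 {S D : Type*} [Monoid S] [MulAction S D] :
    (∀ r : Set D → Set D → Prop, IsConsRel (S := S) r →
      IsPNucleus (S := S) (gammaOf r) ∧ ∀ Φ Ψ : Set D, (Ψ ⊆ gammaOf r Φ ↔ r Φ Ψ)) ∧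
    (∀ γ : Set D → Set D, IsPNucleus (S := S) γ →
      IsConsRel (S := S) (fun Φ Ψ => Ψ ⊆ γ Φ) ∧
      ∀ Φ : Set D, gammaOf (fun Φ' Ψ => Ψ ⊆ γ Φ') Φ = γ Φ) := by
  constructor
  · intro r hr
    obtain ⟨hrefl, hcut, hunion, hstr⟩ := hr
    have hself : ∀ Φ : Set D, r Φ (gammaOf r Φ) := fun Φ =>
      hunion Φ _ (fun Ψ hΨ => hΨ)
    have hiff : ∀ Φ Ψ : Set D, Ψ ⊆ gammaOf r Φ ↔ r Φ Ψ := by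
      intro Φ Ψ
      constructor
      · intro h
        exact hcut Φ _ Ψ (hself Φ) (hrefl _ _ h)
      · intro h
        exact subset_sUnion_of_mem h
    refine ⟨⟨?_, ?_, ?_, ?_⟩, hiff⟩
    · intro Φ; exact (hiff Φ Φ).2 (hrefl Φ Φ subset_rfl)
    · intro Φ Ψ h
      exact (hiff Ψ _).2 (hcut Ψ Φ _ (hrefl _ _ h) (hself Φ))
    · intro Φ
      apply Set.Subset.antisymm
      · exact (hiff Φ _).2 (hcut Φ _ _ (hself Φ) (hself _))
      · exact (hiff _ _).2 (hrefl _ _ subset_rfl)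
    · intro A Φ
      rintro _ ⟨σ, hσ, φ, hφ, rfl⟩
      obtain ⟨Ψ, hΨ, hφΨ⟩ := hφ
      have h1 : r ((fun φ => σ • φ) '' Φ) ((fun φ => σ • φ) '' Ψ) := hstr σ Φ Ψ hΨ
      have h2 : r (actOn A Φ) ((fun φ => σ • φ) '' Φ) := by
        apply hrefl
        rintro _ ⟨x, hx, rfl⟩
        exact ⟨σ, hσ, x, hx, rfl⟩
      have h3 : r (actOn A Φ) ((fun φ => σ • φ) '' Ψ) := hcut _ _ _ h2 h1
      exact subset_sUnion_of_mem h3 ⟨φ, hφΨ, rfl⟩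
  · intro γ hγ
    obtain ⟨hext, hmono, hidem, hact⟩ := hγ
    refine ⟨⟨?_, ?_, ?_, ?_⟩, ?_⟩
    · intro Φ Ψ h; exact h.trans (hext Φ)
    · intro Φ Ψ X h1 h2
      exact h2.trans ((hmono _ _ h1).trans ((hidem Φ).le))
    · intro Φ F h
      exact Set.sUnion_subset h
    · intro σ Φ Ψ h
      have h1 : (fun φ => σ • φ) '' Ψ ⊆ actOn {σ} (γ Φ) := by
        rintro _ ⟨x, hx, rfl⟩
        exact ⟨σ, rfl, x, h hx, rfl⟩
      refine h1.trans ((hact {σ} Φ).trans (hmono _ _ ?_))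
      rintro _ ⟨s, hs, x, hx, rfl⟩
      rcases hs with rfl
      exact ⟨x, hx, rfl⟩
    · intro Φ
      apply Set.Subset.antisymm
      · exact Set.sUnion_subset (fun Ψ hΨ => hΨ)
      · exact subset_sUnion_of_mem (subset_rfl : γ Φ ⊆ γ Φ)


end PDS
end

section
/- Let Q be a unital quantale, M a left Q-module, and θ ⊆ M × M. Call s ∈ M θ-saturated if for all (v, w) ∈ θ and all a ∈ Q, a·v ≤ s iff a·w ≤ s. Then the set S of θ-saturated elements of M is closed under arbitrary meets in M, and the map γ : M → M sending x to the meet of all θ-saturated elements above x is a Q-module nucleus on M. -/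
open Set

namespace PDS

theorem stmt12 {Q M : Type*} [CompleteLattice Q] [CompleteLattice M]
    (m : Q → Q → Q) (e : Q) (hQ : IsQuantale m e)
    (sm : Q → M → M) (hM : IsQMod m e sm)
    (θ : Set (M × M)) :
    let Sat : Set M := {s | ∀ p ∈ θ, ∀ a : Q, (sm a p.1 ≤ s ↔ sm a p.2 ≤ s)}
    (∀ T : Set M, T ⊆ Sat → sInf T ∈ Sat) ∧
    IsQModNucleus sm (fun x => sInf {s | s ∈ Sat ∧ x ≤ s}) := by
  obtain ⟨hassoc, _, _, _, _⟩ := hQ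
  obtain ⟨hMsup, _, hMassoc, _⟩ := hM
  intro Sat
  -- Sat closed under meets
  have hmeet : ∀ T : Set M, T ⊆ Sat → sInf T ∈ Sat := by
    intro T hT p hp a
    constructor <;> intro h <;> apply le_sInf <;> intro t ht
    · exact (hT ht p hp a).mp (h.trans (sInf_le ht))
    · exact (hT ht p hp a).mpr (h.trans (sInf_le ht))
  refine ⟨hmeet, ?_, ?_, ?_, ?_⟩
  · intro x
    exact le_sInf fun s hs => hs.2
  · intro x y hxy
    exact le_sInf fun s hs => sInf_le ⟨hs.1, hxy.trans hs.2⟩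
  · intro x
    apply le_antisymm
    · apply sInf_le
      refine ⟨hmeet _ (fun s hs => hs.1), le_rfl⟩
    · exact le_sInf fun s hs => sInf_le ⟨hs.1, (le_sInf fun t ht => ht.2).trans hs.2⟩
  · intro a x
    apply le_sInf
    intro s hs
    -- residual
    set r : M := sSup {y | sm a y ≤ s} with hr
    have hadj : ∀ y : M, sm a y ≤ s ↔ y ≤ r := by
      intro y
      constructor
      · intro h; exact le_sSup h
      · intro h
        have hmono : sm a y ≤ sm a r := by
          have : r = sSup {y, r} := by rw [sSup_pair, sup_eq_right.mpr h]
          rw [this, hMsup a _]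
          exact le_iSup₂_of_le y (Set.mem_insert _ _) le_rfl
        refine hmono.trans ?_
        rw [show sm a r = ⨆ z ∈ {y | sm a y ≤ s}, sm a z from hMsup a _]
        exact iSup₂_le fun z hz => hz
    have hrSat : r ∈ Sat := by
      intro p hp b
      rw [← hadj, ← hadj, ← hMassoc, ← hMassoc]
      exact hs.1 p hp (m a b)
    have hxr : x ≤ r := (hadj x).mp hs.2
    have : sInf {t | t ∈ Sat ∧ x ≤ t} ≤ r := sInf_le ⟨hrSat, hxr⟩
    exact (hadj _).mpr this

end PDS
end
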